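/- arXiv:2602.07723 — 9 statements merged into one kernel-verified Lean document; each statement's English description precedes it below -/
import Mathlib

section
/- Let p be a prime with p ≡ 3 (mod 4). If integers l, m, k satisfy 5l⁴ + 2l²m² + m⁴ = 5p·k², then p divides both l and m. -/
theorem stmt_1 (p : ℕ) (hp : Nat.Prime p) (h4 : p % 4 = 3) (l m k : ℤ)
    (heq : 5 * l ^ 4 + 2 * l ^ 2 * m ^ 2 + m ^ 4 = 5 * (p : ℤ) * k ^ 2) :
    (p : ℤ) ∣ l ∧ (p : ℤ) ∣ m := by
  haveI : Fact (Nat.Prime p) := ⟨hp⟩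
  set a : ZMod p := (l : ZMod p) with ha
  set b : ZMod p := (m : ZMod p) with hb
  have hz : 5 * a ^ 4 + 2 * a ^ 2 * b ^ 2 + b ^ 4 = 0 := by
    have := congrArg (fun x : ℤ => (x : ZMod p)) heq
    push_cast at this
    simpa [ZMod.natCast_self] using this
  have key : (a ^ 2 + b ^ 2) ^ 2 + (2 * a ^ 2) ^ 2 = 0 := by linear_combination hz
  have h2 : (2 : ZMod p) ≠ 0 := by
    intro h
    have : (p : ℕ) ∣ 2 := by
      have := (ZMod.natCast_eq_zero_iff 2 p).mp (by exact_mod_cast h)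
      exact this
    have := Nat.le_of_dvd (by norm_num) this
    omega
  have hA : a = 0 := by
    by_contra hA
    have h2a : (2 * a ^ 2 : ZMod p) ≠ 0 := by
      intro h
      rcases mul_eq_zero.mp h with h' | h'
      · exact h2 h'
      · exact hA (pow_eq_zero_iff (by norm_num) |>.mp h')
    have hsq : IsSquare (-1 : ZMod p) := by
      refine ⟨(a ^ 2 + b ^ 2) * (2 * a ^ 2)⁻¹, ?_⟩
      have hinv : (2 * a ^ 2) * (2 * a ^ 2)⁻¹ = 1 := mul_inv_cancel₀ h2a
      field_simp
      linear_combination -key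
    exact (ZMod.exists_sq_eq_neg_one_iff.mp hsq) h4
  have hB : b = 0 := by
    rw [hA] at key
    have h1 : (b ^ 2) ^ 2 = 0 := by linear_combination key
    have h2' : b ^ 2 = 0 := pow_eq_zero_iff (by norm_num) |>.mp h1
    exact pow_eq_zero_iff (by norm_num) |>.mp h2'
  constructor
  · exact (ZMod.intCast_zmod_eq_zero_iff_dvd l p).mp hA
  · exact (ZMod.intCast_zmod_eq_zero_iff_dvd m p).mp hB
end

section
/- Let p be a prime with p ≡ ±2 (mod 5). If integers l, m, k satisfy l⁴ − l²m² − m⁴ = p·k² with gcd(l,m) = 1, then a contradiction arises; i.e., there is no such solution. -/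
lemma aux2_stmt2 : ∀ (L M A B : ZMod 2), L ^ 4 - L ^ 2 * M ^ 2 - M ^ 4 = 0 →
    A * L + B * M = 1 → False := by decide

lemma nsq2_stmt2 : ¬ IsSquare (2 : ZMod 5) := by decide

lemma nsq3_stmt2 : ¬ IsSquare (3 : ZMod 5) := by decide

theorem stmt_2 (p : ℕ) (hp : Nat.Prime p) (h5 : p % 5 = 2 ∨ p % 5 = 3) (l m k : ℤ)
    (hco : IsCoprime l m)
    (heq : l ^ 4 - l ^ 2 * m ^ 2 - m ^ 4 = (p : ℤ) * k ^ 2) :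
    False := by
  haveI : Fact p.Prime := ⟨hp⟩
  obtain ⟨a, b, hab⟩ := hco
  -- reduce everything mod p
  have hz : (l : ZMod p) ^ 4 - (l : ZMod p) ^ 2 * (m : ZMod p) ^ 2 - (m : ZMod p) ^ 4 = 0 := by
    have := congrArg (fun x : ℤ => (x : ZMod p)) heq
    push_cast at this
    simpa using this
  have habz : (a : ZMod p) * l + (b : ZMod p) * m = 1 := by
    have := congrArg (fun x : ℤ => (x : ZMod p)) hab
    push_cast at this
    simpa using this
  rcases eq_or_ne p 2 with rfl | hp2
  · -- p = 2 case
    exact aux2_stmt2 _ _ _ _ hz habz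
  · -- odd p
    have hp5 : p ≠ 5 := by rintro rfl; simp at h5
    haveI : Fact (Nat.Prime 5) := ⟨by norm_num⟩
    -- 5 is not a square mod p
    have h5ns : ¬ IsSquare (5 : ZMod p) := by
      have hiff := ZMod.exists_sq_eq_prime_iff_of_mod_four_eq_one (p := 5) (q := p)
        (by norm_num) hp2
      have hcast : ((p : ℕ) : ZMod 5) = ((p % 5 : ℕ) : ZMod 5) := (ZMod.natCast_mod p 5).symm
      intro hsq
      have : IsSquare ((p : ℕ) : ZMod 5) := hiff.mpr (by exact_mod_cast hsq)
      rw [hcast] at this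
      rcases h5 with h | h <;> rw [h] at this <;>
        [exact nsq2_stmt2 (by exact_mod_cast this);
         exact nsq3_stmt2 (by exact_mod_cast this)]
    set L := (l : ZMod p)
    set M := (m : ZMod p)
    have key : (2 * L ^ 2 - M ^ 2) ^ 2 = 5 * M ^ 4 := by ring_nf; linear_combination 4 * hz
    rcases eq_or_ne M 0 with hM | hM
    · -- then L = 0 too, contradicting coprimality
      rw [hM] at hz
      have hL4 : L ^ 4 = 0 := by linear_combination hz
      have hL : L = 0 := pow_eq_zero_iff (n := 4) (by norm_num) |>.mp hL4
      rw [hL, hM] at habz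
      simp at habz
    · apply h5ns
      have hM2 : M ^ 2 ≠ 0 := pow_ne_zero _ hM
      refine ⟨(2 * L ^ 2 - M ^ 2) / M ^ 2, ?_⟩
      field_simp
      linear_combination -key
end

section
/- Let p be a prime with p ≡ 2 (mod 3). Then there are no integers l, m, k with gcd(l,m) = 1 satisfying l⁴ + l²m² + m⁴ = p·k². -/
theorem stmt_3 (p : ℕ) (hp : Nat.Prime p) (h3 : p % 3 = 2) (l m k : ℤ)
    (hco : IsCoprime l m)
    (heq : l ^ 4 + l ^ 2 * m ^ 2 + m ^ 4 = (p : ℤ) * k ^ 2) :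
    False := by
  haveI : Fact p.Prime := ⟨hp⟩
  set L : ZMod p := (l : ZMod p)
  set M : ZMod p := (m : ZMod p)
  have hz : L ^ 4 + L ^ 2 * M ^ 2 + M ^ 4 = 0 := by
    have := congrArg (fun z : ℤ => (z : ZMod p)) heq
    push_cast at this
    simpa [ZMod.natCast_self] using this
  obtain ⟨a, b, hab⟩ := hco
  have hnot : ¬ (L = 0 ∧ M = 0) := by
    rintro ⟨hL, hM⟩
    have := congrArg (fun z : ℤ => (z : ZMod p)) hab
    push_cast at this
    rw [show ((l : ZMod p) = 0) from hL, show ((m : ZMod p) = 0) from hM] at this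
    simp at this
  have hM : M ≠ 0 := by
    intro hM
    apply hnot
    refine ⟨?_, hM⟩
    have h4 : L ^ 4 = 0 := by rw [hM] at hz; linear_combination hz
    exact pow_eq_zero_iff (by norm_num) |>.mp h4
  set x : ZMod p := L * M⁻¹ with hx
  have hMi : M * M⁻¹ = 1 := mul_inv_cancel₀ hM
  have hx0 : x ≠ 0 := by
    intro h
    rcases mul_eq_zero.mp h with h | h
    · apply hnot
      refine ⟨h, ?_⟩
      rw [h] at hz
      have h4 : M ^ 4 = 0 := by linear_combination hz
      exact pow_eq_zero_iff (by norm_num) |>.mp h4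
    · rw [h, mul_zero] at hMi
      exact zero_ne_one hMi
  have hchar : x ^ 4 + x ^ 2 + 1 = 0 := by
    rw [hx]
    linear_combination M⁻¹ ^ 4 * hz
      - (L ^ 2 * M⁻¹ ^ 2 * (1 + M * M⁻¹) + (1 + M * M⁻¹) * (1 + M ^ 2 * M⁻¹ ^ 2)) * hMi
  have hx6 : x ^ 6 = 1 := by
    have h : x ^ 6 - 1 = (x ^ 2 - 1) * (x ^ 4 + x ^ 2 + 1) := by ring
    rw [hchar, mul_zero] at h
    exact sub_eq_zero.mp h
  have hdvd6 : orderOf x ∣ 6 := orderOf_dvd_of_pow_eq_one hx6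
  have hdvdp : orderOf x ∣ p - 1 := ZMod.orderOf_dvd_card_sub_one hx0
  have h3nd : ¬ 3 ∣ p - 1 := by
    have := hp.one_lt
    omega
  have hco3 : Nat.Coprime 3 (orderOf x) := by
    rw [Nat.prime_three.coprime_iff_not_dvd]
    intro hd
    exact h3nd (hd.trans hdvdp)
  have hdvd2 : orderOf x ∣ 2 :=
    (Nat.Coprime.dvd_of_dvd_mul_right hco3.symm) (by simpa using hdvd6)
  have hx2 : x ^ 2 = 1 := orderOf_dvd_iff_pow_eq_one.mp hdvd2
  have h30 : (3 : ZMod p) = 0 := by linear_combination hchar - (x ^ 2 + 2) * hx2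
  have hpd : p ∣ 3 := by
    have := (ZMod.natCast_eq_zero_iff 3 p).mp (by exact_mod_cast h30)
    exact this
  have : p = 3 := (Nat.prime_dvd_prime_iff_eq hp Nat.prime_three).mp hpd
  omega
end

section
/- Let p be a prime with p ≡ 3 (mod 8). Then there are no integers l, m with l and m both odd, gcd(l,m) = 1, and integers u, v such that l² + m² = 2u² and l² − 3m² = 2pv². -/
/-!
Modulo `p` the equations read `l² ≡ 3m²` and (after subtracting) `u² ≡ 2m²`. The first and
`gcd(l, m) = 1` force `m ≢ 0`, so the second makes `2` a square mod `p`,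
which is impossible for `p ≡ 3 (mod 8)` by the second supplement to quadratic reciprocity.
-/

theorem isSquare_of_sq_eq_mul_sq {K : Type*} [Field K] {a u m : K} (hm : m ≠ 0)
    (h : u ^ 2 = a * m ^ 2) : IsSquare a := by
  have ha : a = u ^ 2 / m ^ 2 := by field_simp; exact h.symm
  exact ha ▸ (IsSquare.sq u).div (IsSquare.sq m)

theorem IsCoprime.intCast_ne_zero_of_intCast_eq_zero {R : Type*} [CommRing R] [Nontrivial R]
    {l m : ℤ} (h : IsCoprime l m) (hl : (l : R) = 0) : (m : R) ≠ 0 := by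
  intro hm
  have h0 : IsCoprime (0 : R) 0 := by simpa [hl, hm] using h.map (Int.castRingHom R)
  exact not_isUnit_zero (isCoprime_zero_left.mp h0)

theorem stmt_4 (p : ℕ) (hp : Nat.Prime p) (h8 : p % 8 = 3) :
    ¬ ∃ l m u v : ℤ, Odd l ∧ Odd m ∧ IsCoprime l m ∧
      l ^ 2 + m ^ 2 = 2 * u ^ 2 ∧ l ^ 2 - 3 * m ^ 2 = 2 * (p : ℤ) * v ^ 2 := by
  rintro ⟨l, m, u, v, -, -, hco, hsum, hdiff⟩
  have : Fact p.Prime := ⟨hp⟩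
  have hl : (l : ZMod p) ^ 2 = 3 * (m : ZMod p) ^ 2 := by
    have := congrArg (Int.cast : ℤ → ZMod p) hdiff
    push_cast [ZMod.natCast_self] at this
    linear_combination this
  have hu : (u : ZMod p) ^ 2 = 2 * (m : ZMod p) ^ 2 := by
    have key : u ^ 2 = 2 * m ^ 2 + p * v ^ 2 := by linarith
    have := congrArg (Int.cast : ℤ → ZMod p) key
    push_cast [ZMod.natCast_self] at this
    linear_combination this
  have hm : (m : ZMod p) ≠ 0 := by
    intro hm
    have hl0 : (l : ZMod p) = 0 := pow_eq_zero_iff two_ne_zero |>.mp (by rw [hl, hm]; ring)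
    exact hco.intCast_ne_zero_of_intCast_eq_zero hl0 hm
  have htwo := isSquare_of_sq_eq_mul_sq hm hu
  rw [ZMod.exists_sq_eq_two_iff (by omega)] at htwo
  omega
end

section
/- Let p, q be primes with p ≡ 3 (mod 8) and q ≡ 3 (mod 8). Then there are no integers l, m, u, v with gcd(l,m) = 1 such that l² − q·m² = u² and l² + 3q·m² = p·v². -/
theorem stmt_9 (p q : ℕ) (hp : Nat.Prime p) (hq : Nat.Prime q)
    (hp8 : p % 8 = 3) (hq8 : q % 8 = 3) :
    ¬ ∃ l m u v : ℤ, IsCoprime l m ∧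
      l ^ 2 - (q : ℤ) * m ^ 2 = u ^ 2 ∧
      l ^ 2 + 3 * (q : ℤ) * m ^ 2 = (p : ℤ) * v ^ 2 := by
  rintro ⟨l, m, u, v, hco, -, h2⟩
  have hq' : ((q : ℕ) : ZMod 8) = 3 := by
    rw [← ZMod.natCast_mod, hq8]; rfl
  have hp' : ((p : ℕ) : ZMod 8) = 3 := by
    rw [← ZMod.natCast_mod, hp8]; rfl
  have h2' : (l : ZMod 8) ^ 2 + 3 * 3 * (m : ZMod 8) ^ 2 = 3 * (v : ZMod 8) ^ 2 := by
    have := congrArg (Int.cast : ℤ → ZMod 8) h2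
    push_cast at this
    rw [hq', hp'] at this
    linear_combination this
  have hodd : ¬((2 : ℤ) ∣ l ∧ (2 : ℤ) ∣ m) := by
    rintro ⟨d1, d2⟩
    have := hco.isUnit_of_dvd' d1 d2
    rw [Int.isUnit_iff] at this
    omega
  have hsq : ∀ k : ZMod 8, (2 * k + 1) ^ 2 = 1 := by decide
  have hlm : (l : ZMod 8) ^ 2 = 1 ∨ (m : ZMod 8) ^ 2 = 1 := by
    rcases Int.even_or_odd l with hl | ⟨k, hk⟩
    · rcases Int.even_or_odd m with hm | ⟨k, hk⟩
      · exact absurd ⟨hl.two_dvd, hm.two_dvd⟩ hodd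
      · right; rw [hk]; push_cast; exact hsq _
    · left; rw [hk]; push_cast; exact hsq _
  have key : ∀ a b c : ZMod 8, (a ^ 2 = 1 ∨ b ^ 2 = 1) →
      a ^ 2 + 3 * 3 * b ^ 2 ≠ 3 * c ^ 2 := by decide
  exact key _ _ _ hlm h2'
end

section
/- Every primitive solution (l, m, u) in integers of l² + m² = 2u² with l, m odd and gcd(l, m) = 1 can be parametrized as ±l = α² − 2β², ±m = α² − 4αβ + 2β² for coprime integers α, β. -/
theorem stmt_11 (l m u : ℤ) (hl : Odd l) (hm : Odd m) (hco : IsCoprime l m)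
    (h : l ^ 2 + m ^ 2 = 2 * u ^ 2) :
    ∃ α β : ℤ, IsCoprime α β ∧
      (l = α ^ 2 - 2 * β ^ 2 ∨ l = -(α ^ 2 - 2 * β ^ 2)) ∧
      (m = α ^ 2 - 4 * α * β + 2 * β ^ 2 ∨ m = -(α ^ 2 - 4 * α * β + 2 * β ^ 2)) := by
  obtain ⟨k, hk⟩ := hl
  obtain ⟨j, hj⟩ := hm
  set a : ℤ := k + j + 1 with ha
  set b : ℤ := k - j with hb
  have hla : l = a + b := by rw [ha, hb]; omega
  have hma : m = a - b := by rw [ha, hb]; omega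
  have hpt : PythagoreanTriple a b u := by
    have h2 : (a + b) ^ 2 + (a - b) ^ 2 = 2 * u ^ 2 := by rw [← hla, ← hma]; exact h
    unfold PythagoreanTriple
    nlinarith [h2]
  have hab : IsCoprime a b := by
    obtain ⟨x, y, hxy⟩ := hco
    exact ⟨x + y, x - y, by rw [hla, hma] at hxy; ring_nf; ring_nf at hxy; linarith⟩
  have hgcd : Int.gcd a b = 1 := Int.isCoprime_iff_gcd_eq_one.mp hab
  obtain ⟨s, t, hst, _, hco', _⟩ :=
    (PythagoreanTriple.coprime_classification).mp ⟨hpt, hgcd⟩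
  have hst' : IsCoprime s t := Int.isCoprime_iff_gcd_eq_one.mpr hco'
  refine ⟨s + t, t, ?_, ?_, ?_⟩
  · have := hst'.add_mul_left_left 1
    simpa using this
  · rcases hst with ⟨h1, h2⟩ | ⟨h1, h2⟩ <;> [left; left] <;>
      rw [hla, h1, h2] <;> ring
  · rcases hst with ⟨h1, h2⟩ | ⟨h1, h2⟩ <;> [left; right] <;>
      rw [hma, h1, h2] <;> ring
end

section
/- Let α, β be coprime integers, both odd, let q be a prime with q ≡ 3 (mod 8), and let p be a prime with p ≡ 3 (mod 4). Then the equation (α² + qβ²)² − 16q α²β² = p v² has no solution in integers v with α, β both odd and coprime. -/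
set_option maxRecDepth 4000 in
lemma aux_zmod64 : ∀ x y : ZMod 64, x.val % 2 = 1 → x * y ^ 2 ≠ 32 := by decide

lemma odd_sq_eq (α : ℤ) (hα : Odd α) : ∃ s : ℤ, α ^ 2 = 8 * s + 1 := by
  obtain ⟨k, hk⟩ := hα
  obtain ⟨r, hr⟩ : Even (k * (k + 1)) := Int.even_mul_succ_self k
  exact ⟨r, by subst hk; nlinarith [hr]⟩

theorem stmt_12 (q p : ℕ) (hq : Nat.Prime q) (hq8 : q % 8 = 3)
    (hp : Nat.Prime p) (hp4 : p % 4 = 3)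
    (α β : ℤ) (hα : Odd α) (hβ : Odd β) (hco : IsCoprime α β) :
    ¬ ∃ v : ℤ, (α ^ 2 + (q : ℤ) * β ^ 2) ^ 2 - 16 * (q : ℤ) * α ^ 2 * β ^ 2 =
      (p : ℤ) * v ^ 2 := by
  rintro ⟨v, hv⟩
  obtain ⟨s, hs⟩ := odd_sq_eq α hα
  obtain ⟨t, ht⟩ := odd_sq_eq β hβ
  obtain ⟨c, hc⟩ : ∃ c : ℤ, (q : ℤ) = 8 * c + 3 := ⟨(q / 8 : ℕ), by omega⟩
  have hL : (p : ℤ) * v ^ 2 = 64 * (-1 + -1*c + c^2 + -3*t + -2*t*c + 16*t*c^2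
      + 9*t^2 + 48*t^2*c + 64*t^2*c^2 + -5*s + -14*s*c + -42*s*t + -112*s*t*c
      + s^2) + 32 := by
    rw [← hv, hs, ht, hc]; ring
  have h2 : (p : ZMod 64) * (v : ZMod 64) ^ 2 = 32 := by
    have := congrArg (Int.cast : ℤ → ZMod 64) hL
    push_cast at this
    rw [this]
    rw [show ((64 : ZMod 64)) = 0 by decide]
    ring
  have hval : (p : ZMod 64).val % 2 = 1 := by
    rw [ZMod.val_natCast]
    omega
  exact aux_zmod64 _ _ hval h2
end

section
/- Let E: y² = x(x² + ax + b) and E′: y² = x(x² + a′x + b′) with a′ = −2a and b′ = a² − 4b, and let φ : E → E′ be the 2-isogeny with kernel {O, (0,0)}. Define φ̄ : E′(ℚ) → ℚ^×/(ℚ^×)² by φ̄((x,y)) = x̄ for x ≠ 0, φ̄((0,0)) = the class of a² − 4b, and φ̄(O) = 1. Then φ̄ is a group homomorphism whose kernel is exactly φ(E(ℚ)); in particular E′(ℚ)/φ(E(ℚ)) ≅ φ̄(E′(ℚ)). -/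
/-!
If the line `y = ℓ x + ν` meets `E' : y² = x (x² + A x + B)` in `x₁, x₂, x₃`, then
`x₁ x₂ x₃ = ν²` and `x₁ x₂ + x₁ x₃ + x₂ x₃ = B - 2 ℓ ν`. Hence the product of the three classes is
trivial (when some `xᵢ = 0`, then `ν = 0` and the other two multiply to `B`), which is the
homomorphism property.

The image of `φ (x, y) = (y² / x², …)` is visibly a square, and the image of a point with
`x + a + b / x = 0` is `(0, 0)`, where then `a² - 4b = (2x + a)²`. Conversely, a point `(w², y)` is
hit by `(ξ, ξ w)` for an explicit `ξ` obtained by solving two quadratics, and `(0, 0)` is hit by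
`(ξ, 0)` with `ξ` a root of `ξ² + a ξ + b`, which is rational when `a² - 4b` is a square.
-/

/-- The subgroup of squares in `ℚˣ`. -/
def QSq : Subgroup ℚˣ := (powMonoidHom 2 : ℚˣ →* ℚˣ).range

/-- The class of a nonzero rational number in `ℚˣ/(ℚˣ)²` (junk value `1` at `0`). -/
noncomputable def sqClass (x : ℚ) : ℚˣ ⧸ QSq :=
  if h : x = 0 then 1 else QuotientGroup.mk (Units.mk0 x h)

lemma sqClass_mul {x y : ℚ} (hx : x ≠ 0) (hy : y ≠ 0) :
    sqClass (x * y) = sqClass x * sqClass y := by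
  rw [sqClass, sqClass, sqClass, dif_neg hx, dif_neg hy, dif_neg (mul_ne_zero hx hy),
    ← QuotientGroup.mk_mul, Units.mk0_mul]

lemma sqClass_eq_one_iff {x : ℚ} (hx : x ≠ 0) : sqClass x = 1 ↔ ∃ t : ℚ, x = t ^ 2 := by
  rw [sqClass, dif_neg hx, QuotientGroup.eq_one_iff]
  constructor
  · rintro ⟨t, ht⟩
    exact ⟨t, by simpa using congrArg Units.val ht.symm⟩
  · rintro ⟨t, rfl⟩
    exact ⟨Units.mk0 t (by simpa using hx), by ext; simp⟩

lemma sqClass_sq {t : ℚ} (ht : t ≠ 0) : sqClass (t ^ 2) = 1 :=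
  (sqClass_eq_one_iff (pow_ne_zero 2 ht)).2 ⟨t, rfl⟩

lemma sqClass_mul_self (x : ℚ) : sqClass x * sqClass x = 1 := by
  by_cases hx : x = 0
  · simp [sqClass, hx]
  · rw [← sqClass_mul hx hx, ← sq, sqClass_sq hx]

lemma sqClass_eq_mul_of_mul_mul_eq_one {x y z : ℚ}
    (h : sqClass x * sqClass y * sqClass z = 1) : sqClass z = sqClass x * sqClass y := by
  calc sqClass z = sqClass x * sqClass y * sqClass z * sqClass z := by rw [h, one_mul]
    _ = sqClass x * sqClass y := by rw [mul_assoc _ (sqClass z), sqClass_mul_self, mul_one]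

def twoTorsionCurve {K : Type*} [Field K] (A B : K) : WeierstrassCurve.Affine K :=
  { a₁ := 0, a₂ := A, a₃ := 0, a₄ := B, a₆ := 0 }

namespace twoTorsionCurve

open WeierstrassCurve.Affine

variable {K : Type*} [Field K] {A B x y : K}

lemma equation_iff : (twoTorsionCurve A B).Equation x y ↔ y ^ 2 = x ^ 3 + A * x ^ 2 + B * x := by
  simp [WeierstrassCurve.Affine.equation_iff, twoTorsionCurve]

lemma y_eq_zero_of_equation_zero (h : (twoTorsionCurve A B).Equation 0 y) : y = 0 := by
  simpa using equation_iff.1 h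

lemma nonsingular_iff [NeZero (2 : K)] (hB : B * (A ^ 2 - 4 * B) ≠ 0) :
    (twoTorsionCurve A B).Nonsingular x y ↔ y ^ 2 = x ^ 3 + A * x ^ 2 + B * x := by
  rw [← equation_iff_nonsingular_of_Δ_ne_zero, equation_iff]
  have hΔ : (twoTorsionCurve A B).Δ = 2 ^ 4 * (B * (A ^ 2 - 4 * B)) * B := by
    simp only [WeierstrassCurve.Δ, WeierstrassCurve.b₂, WeierstrassCurve.b₄,
      WeierstrassCurve.b₆, WeierstrassCurve.b₈, twoTorsionCurve]
    ring
  rw [hΔ]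
  exact mul_ne_zero (mul_ne_zero (pow_ne_zero 4 two_ne_zero) hB) (left_ne_zero_of_mul hB)

variable [DecidableEq K]

/-- Vieta's formulas for the cubic `x (x² + A x + B) - (ℓ x + ν)²`, whose roots are the
`x`-coordinates of `P₁`, `P₂` and `-(P₁ + P₂)` when `y = ℓ x + ν` is the line through `P₁`, `P₂`. -/
lemma exists_vieta {x₁ x₂ y₁ y₂ : K} (h₁ : (twoTorsionCurve A B).Equation x₁ y₁)
    (h₂ : (twoTorsionCurve A B).Equation x₂ y₂)
    (hxy : ¬(x₁ = x₂ ∧ y₁ = (twoTorsionCurve A B).negY x₂ y₂)) :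
    let x₃ := (twoTorsionCurve A B).addX x₁ x₂ ((twoTorsionCurve A B).slope x₁ x₂ y₁ y₂)
    ∃ ℓ ν : K, x₁ * x₂ * x₃ = ν ^ 2 ∧ x₁ * x₂ + x₁ * x₃ + x₂ * x₃ = B - 2 * ℓ * ν := by
  have h := addPolynomial_slope h₁ h₂ hxy
  rw [addPolynomial_eq, neg_inj, Cubic.prod_X_sub_C_eq, Cubic.toPoly_injective] at h
  simp only [Cubic.mk.injEq] at h
  refine ⟨(twoTorsionCurve A B).slope x₁ x₂ y₁ y₂,
    y₁ - (twoTorsionCurve A B).slope x₁ x₂ y₁ y₂ * x₁, ?_, ?_⟩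
  · simp only [twoTorsionCurve] at h ⊢
    linear_combination h.2.2.2
  · simp only [twoTorsionCurve] at h ⊢
    linear_combination -h.2.2.1

end twoTorsionCurve

def descentRep (B x : ℚ) : ℚ := if x = 0 then B else x

lemma descentRep_zero {B : ℚ} : descentRep B 0 = B := if_pos rfl

lemma descentRep_of_ne_zero {B x : ℚ} (hx : x ≠ 0) : descentRep B x = x := if_neg hx

lemma sqClass_descentRep_mul_mul_of_left_eq_zero {B ℓ ν x₂ x₃ : ℚ} (hB : B ≠ 0)
    (h₃ : 0 * x₂ * x₃ = ν ^ 2) (h₂ : 0 * x₂ + 0 * x₃ + x₂ * x₃ = B - 2 * ℓ * ν) :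
    sqClass (descentRep B 0) * sqClass (descentRep B x₂) * sqClass (descentRep B x₃) = 1 := by
  have hν : ν = 0 := pow_eq_zero_iff two_ne_zero |>.1 (by linear_combination -h₃)
  have hx : x₂ * x₃ = B := by linear_combination h₂ - 2 * ℓ * hν
  obtain ⟨hx₂, hx₃⟩ := mul_ne_zero_iff.1 (hx ▸ hB)
  rw [descentRep_zero, descentRep_of_ne_zero hx₂, descentRep_of_ne_zero hx₃,
    ← sqClass_mul hB hx₂, ← sqClass_mul (mul_ne_zero hB hx₂) hx₃, mul_assoc, hx, ← sq,
    sqClass_sq hB]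

lemma sqClass_descentRep_mul_mul {B ℓ ν x₁ x₂ x₃ : ℚ} (hB : B ≠ 0)
    (h₃ : x₁ * x₂ * x₃ = ν ^ 2) (h₂ : x₁ * x₂ + x₁ * x₃ + x₂ * x₃ = B - 2 * ℓ * ν) :
    sqClass (descentRep B x₁) * sqClass (descentRep B x₂) * sqClass (descentRep B x₃) = 1 := by
  by_cases hx₁ : x₁ = 0
  · subst hx₁
    exact sqClass_descentRep_mul_mul_of_left_eq_zero hB h₃ h₂
  by_cases hx₂ : x₂ = 0
  · subst hx₂
    rw [mul_comm (sqClass _)]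
    exact sqClass_descentRep_mul_mul_of_left_eq_zero (ℓ := ℓ) (ν := ν) hB
      (by linear_combination h₃) (by linear_combination h₂)
  by_cases hx₃ : x₃ = 0
  · subst hx₃
    rw [mul_comm, ← mul_assoc]
    exact sqClass_descentRep_mul_mul_of_left_eq_zero (ℓ := ℓ) (ν := ν) hB
      (by linear_combination h₃) (by linear_combination h₂)
  have hν : ν ≠ 0 := by
    rintro rfl
    simp [hx₁, hx₂, hx₃] at h₃
  rw [descentRep_of_ne_zero hx₁, descentRep_of_ne_zero hx₂, descentRep_of_ne_zero hx₃,
    ← sqClass_mul hx₁ hx₂, ← sqClass_mul (mul_ne_zero hx₁ hx₂) hx₃, h₃, sqClass_sq hν]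

open WeierstrassCurve.Affine in
noncomputable def descentMap (A B : ℚ) : (twoTorsionCurve A B).Point → ℚˣ ⧸ QSq
  | .zero => 1
  | .some x _ _ => sqClass (descentRep B x)

namespace descentMap

open WeierstrassCurve.Affine

variable {A B : ℚ}

lemma zero : descentMap A B 0 = 1 := rfl

lemma some {x y : ℚ} (h : (twoTorsionCurve A B).Nonsingular x y) :
    descentMap A B (.some x y h) = sqClass (descentRep B x) := rfl

lemma add (hB : B ≠ 0) (P Q : (twoTorsionCurve A B).Point) :
    descentMap A B (P + Q) = descentMap A B P * descentMap A B Q := by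
  rcases P with _ | @⟨x₁, y₁, h₁⟩
  · rw [← Point.zero_def, zero_add, zero, one_mul]
  rcases Q with _ | @⟨x₂, y₂, h₂⟩
  · rw [← Point.zero_def, add_zero, zero, mul_one]
  by_cases hxy : x₁ = x₂ ∧ y₁ = (twoTorsionCurve A B).negY x₂ y₂
  · rw [Point.add_of_Y_eq hxy.1 hxy.2, zero, some, some, hxy.1, sqClass_mul_self]
  · rw [Point.add_some hxy, some, some, some]
    obtain ⟨ℓ, ν, h₃, h₂⟩ := twoTorsionCurve.exists_vieta h₁.1 h₂.1 hxy
    exact sqClass_eq_mul_of_mul_mul_eq_one (sqClass_descentRep_mul_mul hB h₃ h₂)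

end descentMap

lemma sqClass_descentRep_add_add_div {a b ξ η : ℚ} (hB : a ^ 2 - 4 * b ≠ 0) (hξ : ξ ≠ 0)
    (h : η ^ 2 = ξ ^ 3 + a * ξ ^ 2 + b * ξ) :
    sqClass (descentRep (a ^ 2 - 4 * b) (ξ + a + b / ξ)) = 1 := by
  by_cases h₀ : ξ + a + b / ξ = 0
  · have hdisc : a ^ 2 - 4 * b = (2 * ξ + a) ^ 2 := by
      field_simp at h₀
      linear_combination -4 * h₀
    rw [h₀, descentRep_zero, hdisc]
    exact sqClass_sq (pow_ne_zero_iff two_ne_zero |>.1 (hdisc ▸ hB))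
  · have hx : ξ + a + b / ξ = (η / ξ) ^ 2 := by
      field_simp
      linear_combination -h
    rw [descentRep_of_ne_zero h₀, hx]
    exact sqClass_sq (pow_ne_zero_iff two_ne_zero |>.1 (hx ▸ h₀))

section Isogeny

open WeierstrassCurve.Affine

variable {a b : ℚ}
  (φ : (twoTorsionCurve a b).Point →+ (twoTorsionCurve (-2 * a) (a ^ 2 - 4 * b)).Point)
  (hφ : ∀ x y (h : (twoTorsionCurve a b).Nonsingular x y), x ≠ 0 →
    ∃ h' : (twoTorsionCurve (-2 * a) (a ^ 2 - 4 * b)).Nonsingular (x + a + b / x)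
      (y - b * y / x ^ 2), φ (.some _ _ h) = .some _ _ h')
include hφ

lemma some_mem_range_of_isogeny {ξ η x y : ℚ} (hQ : (twoTorsionCurve a b).Nonsingular ξ η)
    (hξ : ξ ≠ 0) (hx : ξ + a + b / ξ = x) (hy : η - b * η / ξ ^ 2 = y)
    (h : (twoTorsionCurve (-2 * a) (a ^ 2 - 4 * b)).Nonsingular x y) :
    Point.some x y h ∈ Set.range φ := by
  obtain ⟨h', himg⟩ := hφ ξ η hQ hξ
  subst hx hy
  exact ⟨_, himg⟩

lemma some_zero_mem_range (hb : b * (a ^ 2 - 4 * b) ≠ 0) {t : ℚ} (ht : a ^ 2 - 4 * b = t ^ 2)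
    (h : (twoTorsionCurve (-2 * a) (a ^ 2 - 4 * b)).Nonsingular 0 0) :
    Point.some 0 0 h ∈ Set.range φ := by
  have hξ : ((t - a) / 2) ^ 2 + a * ((t - a) / 2) + b = 0 := by
    linear_combination (-1 / 4 : ℚ) * ht
  generalize (t - a) / 2 = ξ at hξ
  have hξ₀ : ξ ≠ 0 := fun h₀ => left_ne_zero_of_mul hb (by simpa [h₀] using hξ)
  refine some_mem_range_of_isogeny φ hφ (η := 0) ((twoTorsionCurve.nonsingular_iff hb).2
    (by linear_combination -ξ * hξ)) hξ₀ ?_ (by simp) h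
  field_simp
  linear_combination hξ

/-- `φ (ξ, ξ w) = (w², w (ξ² - b) / ξ)`, so a preimage of `(w², s w)` has to be a common root of
`ξ² + (a - w²) ξ + b` and `ξ² - s ξ - b`; subtracting them gives `ξ = (w² - a + s) / 2`. -/
lemma some_mem_range_of_eq_sq (hb : b * (a ^ 2 - 4 * b) ≠ 0) {w s x y : ℚ} (hw : w ≠ 0)
    (hx : x = w ^ 2) (hy : y = s * w) (hs : w ^ 2 - a + s ≠ 0)
    (h : (twoTorsionCurve (-2 * a) (a ^ 2 - 4 * b)).Nonsingular x y) :
    Point.some x y h ∈ Set.range φ := by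
  have hxy := twoTorsionCurve.equation_iff.1 h.1
  subst hx hy
  have hs₂ : s ^ 2 = (w ^ 2 - a) ^ 2 - 4 * b := by
    apply mul_right_cancel₀ (pow_ne_zero 2 hw)
    linear_combination hxy
  have hξ₁ : ((w ^ 2 - a + s) / 2) ^ 2 + (a - w ^ 2) * ((w ^ 2 - a + s) / 2) + b = 0 := by
    linear_combination (1 / 4 : ℚ) * hs₂
  have hξ₂ : ((w ^ 2 - a + s) / 2) ^ 2 - b = s * ((w ^ 2 - a + s) / 2) := by
    linear_combination (-1 / 4 : ℚ) * hs₂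
  have hξ₀ : (w ^ 2 - a + s) / 2 ≠ 0 := div_ne_zero hs two_ne_zero
  generalize (w ^ 2 - a + s) / 2 = ξ at hξ₁ hξ₂ hξ₀
  refine some_mem_range_of_isogeny φ hφ (η := ξ * w) ((twoTorsionCurve.nonsingular_iff hb).2
    (by linear_combination -ξ * hξ₁)) hξ₀ ?_ ?_ h
  · field_simp
    linear_combination hξ₁
  · field_simp
    linear_combination hξ₂

lemma some_mem_range_of_sqClass_eq_one (hb : b * (a ^ 2 - 4 * b) ≠ 0) {x y : ℚ} (hx : x ≠ 0)
    (hxc : sqClass x = 1) (h : (twoTorsionCurve (-2 * a) (a ^ 2 - 4 * b)).Nonsingular x y) :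
    Point.some x y h ∈ Set.range φ := by
  obtain ⟨w, rfl⟩ := (sqClass_eq_one_iff hx).1 hxc
  have hw : w ≠ 0 := by rintro rfl; simp at hx
  have hy : y = y / w * w := (div_mul_cancel₀ y hw).symm
  -- Changing the sign of `w` helps unless `y = 0` and `w² = a`, which would force `b = 0`.
  by_cases hs : w ^ 2 - a + y / w = 0
  · refine some_mem_range_of_eq_sq φ hφ hb (s := -(y / w)) (neg_ne_zero.2 hw) (neg_sq w).symm
      (by rw [neg_mul_neg, ← hy]) (fun hs' => ?_) h
    have hyw : y / w = 0 := by linear_combination (hs - hs') / 2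
    have hxy := twoTorsionCurve.equation_iff.1 h.1
    rw [hy, hyw] at hxy
    apply left_ne_zero_of_mul hb
    apply mul_right_cancel₀ (pow_ne_zero 2 hw)
    linear_combination (1 / 4 : ℚ) * hxy + (w ^ 2 * (w ^ 2 - a) / 8) * (hs + hs')
  · exact some_mem_range_of_eq_sq φ hφ hb hw rfl hy hs h

lemma mem_range_of_descentMap_eq_one (hb : b * (a ^ 2 - 4 * b) ≠ 0)
    (P : (twoTorsionCurve (-2 * a) (a ^ 2 - 4 * b)).Point)
    (hP : descentMap (-2 * a) (a ^ 2 - 4 * b) P = 1) : P ∈ Set.range φ := by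
  rcases P with _ | @⟨x, y, h⟩
  · exact ⟨0, map_zero φ⟩
  rw [descentMap.some] at hP
  by_cases hx : x = 0
  · subst hx
    obtain rfl := twoTorsionCurve.y_eq_zero_of_equation_zero h.1
    rw [descentRep_zero] at hP
    obtain ⟨t, ht⟩ := (sqClass_eq_one_iff (right_ne_zero_of_mul hb)).1 hP
    exact some_zero_mem_range φ hφ hb ht h
  · rw [descentRep_of_ne_zero hx] at hP
    exact some_mem_range_of_sqClass_eq_one φ hφ hb hx hP h

lemma descentMap_apply_isogeny_eq_one (hB : a ^ 2 - 4 * b ≠ 0)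
    {h₀ : (twoTorsionCurve a b).Nonsingular 0 0} (hT : φ (.some 0 0 h₀) = 0)
    (Q : (twoTorsionCurve a b).Point) :
    descentMap (-2 * a) (a ^ 2 - 4 * b) (φ Q) = 1 := by
  rcases Q with _ | @⟨ξ, η, h⟩
  · rw [← Point.zero_def, map_zero, descentMap.zero]
  by_cases hξ : ξ = 0
  · subst hξ
    obtain rfl := twoTorsionCurve.y_eq_zero_of_equation_zero h.1
    rw [hT, descentMap.zero]
  obtain ⟨h', himg⟩ := hφ ξ η h hξ
  rw [himg, descentMap.some]
  exact sqClass_descentRep_add_add_div hB hξ (twoTorsionCurve.equation_iff.1 h.1)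

end Isogeny

/-- The descent map `φ̄ : E′(ℚ) → ℚˣ/(ℚˣ)²` associated with the 2-isogeny
`φ : E → E′` (where `E : y² = x(x² + ax + b)` and
`E′ : y² = x(x² - 2ax + (a² - 4b))`), sending `(x,y) ↦ x̄` for `x ≠ 0`,
`(0,0) ↦ a² - 4b`, `O ↦ 1`, is a group homomorphism with kernel `φ(E(ℚ))`. -/
theorem stmt_14 (a b : ℚ) (hb : b * (a ^ 2 - 4 * b) ≠ 0)
    (W W' : WeierstrassCurve.Affine ℚ)
    (hW : W = { a₁ := 0, a₂ := a, a₃ := 0, a₄ := b, a₆ := 0 })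
    (hW' : W' = { a₁ := 0, a₂ := -2 * a, a₃ := 0, a₄ := a ^ 2 - 4 * b, a₆ := 0 })
    (h₀ : W.Nonsingular 0 0) (h₀' : W'.Nonsingular 0 0)
    (φ : W.Point →+ W'.Point)
    (hφ : ∀ x y (h : W.Nonsingular x y), x ≠ 0 →
      ∃ h' : W'.Nonsingular (x + a + b / x) (y - b * y / x ^ 2),
        φ (.some _ _ h) = .some _ _ h')
    (hker : ∀ P : W.Point, φ P = 0 ↔ (P = 0 ∨ P = .some _ _ h₀)) :
    ∃ φb : W'.Point → ℚˣ ⧸ QSq,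
      φb 0 = 1 ∧
      φb (.some _ _ h₀') = sqClass (a ^ 2 - 4 * b) ∧
      (∀ x y (h : W'.Nonsingular x y), x ≠ 0 → φb (.some _ _ h) = sqClass x) ∧
      (∀ P Q : W'.Point, φb (P + Q) = φb P * φb Q) ∧
      (∀ P : W'.Point, φb P = 1 ↔ P ∈ Set.range φ) := by
  subst hW hW'
  have hB : a ^ 2 - 4 * b ≠ 0 := right_ne_zero_of_mul hb
  refine ⟨descentMap (-2 * a) (a ^ 2 - 4 * b), descentMap.zero,
    (descentMap.some h₀').trans (congrArg sqClass descentRep_zero),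
    fun x y h hx => (descentMap.some h).trans (congrArg sqClass (descentRep_of_ne_zero hx)),
    descentMap.add hB, fun P => ⟨mem_range_of_descentMap_eq_one φ hφ hb P, ?_⟩⟩
  rintro ⟨Q, rfl⟩
  exact descentMap_apply_isogeny_eq_one φ hφ hB ((hker _).2 (Or.inr rfl)) Q
end

section
/- Let p be a prime with p ≡ 3 (mod 4) and p ≡ 2 (mod 3) (i.e., p ≡ 11 (mod 12)). If integers l, m, n satisfy p²l⁴ + p·p·l²m² + p²m⁴ = p·n² (equivalently, after the substitution n = pk, l⁴ + l²m² + m⁴ = pk²) with gcd(l, m) = 1, then no solution exists. -/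
lemma aux_not_sq_two : ¬ IsSquare (2 : ZMod 3) := by decide

theorem stmt_18 (p : ℕ) (hp : Nat.Prime p) (h4 : p % 4 = 3) (h3 : p % 3 = 2)
    (l m n : ℤ) (hco : IsCoprime l m)
    (heq : (p : ℤ) ^ 2 * l ^ 4 + (p : ℤ) * (p : ℤ) * l ^ 2 * m ^ 2 + (p : ℤ) ^ 2 * m ^ 4 =
      (p : ℤ) * n ^ 2) :
    False := by
  haveI : Fact p.Prime := ⟨hp⟩
  have hp' : Prime (p : ℤ) := Nat.prime_iff_prime_int.mp hp
  have hp0 : (p : ℤ) ≠ 0 := hp'.ne_zero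
  -- p ∣ l⁴ + l²m² + m⁴
  have h1 : (p : ℤ) * (l ^ 4 + l ^ 2 * m ^ 2 + m ^ 4) = n ^ 2 := by
    have := heq
    apply mul_left_cancel₀ hp0
    ring_nf
    ring_nf at this
    linarith
  have hpn : (p : ℤ) ∣ n := by
    apply hp'.dvd_of_dvd_pow (n := 2)
    exact ⟨_, h1.symm⟩
  obtain ⟨k, hk⟩ := hpn
  have hA : (p : ℤ) ∣ (l ^ 4 + l ^ 2 * m ^ 2 + m ^ 4) := by
    refine ⟨k ^ 2, mul_left_cancel₀ hp0 ?_⟩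
    rw [h1, hk]; ring
  -- move to ZMod p
  set L : ZMod p := (l : ZMod p) with hL
  set M : ZMod p := (m : ZMod p) with hM
  have hZ : L ^ 4 + L ^ 2 * M ^ 2 + M ^ 4 = 0 := by
    have := (ZMod.intCast_zmod_eq_zero_iff_dvd _ p).mpr hA
    push_cast at this
    exact this
  have hMne : M ≠ 0 := by
    intro hM0
    have hL0 : L = 0 := by
      have : L ^ 4 = 0 := by rw [hM0] at hZ; simpa using hZ
      exact pow_eq_zero_iff (by norm_num) |>.mp this
    obtain ⟨a, b, hab⟩ := hco
    have : (a : ZMod p) * L + (b : ZMod p) * M = 1 := by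
      have := congrArg (fun x : ℤ => (x : ZMod p)) hab
      push_cast at this
      exact this
    rw [hL0, hM0] at this
    simp at this
  -- (2L² + M²)² = -3 (M²)²
  have hsq : (2 * L ^ 2 + M ^ 2) ^ 2 = (-3) * (M ^ 2) ^ 2 := by
    have : (2 * L ^ 2 + M ^ 2) ^ 2 + 3 * (M ^ 2) ^ 2 =
        4 * (L ^ 4 + L ^ 2 * M ^ 2 + M ^ 4) := by ring
    rw [hZ] at this
    linear_combination this
  have hM2 : (M ^ 2 : ZMod p) ≠ 0 := pow_ne_zero _ hMne
  have hneg3 : IsSquare (-3 : ZMod p) := by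
    refine ⟨(2 * L ^ 2 + M ^ 2) / M ^ 2, ?_⟩
    field_simp
    linear_combination -hsq
  -- -1 is not a square
  have hneg1 : ¬ IsSquare (-1 : ZMod p) := by
    rw [ZMod.exists_sq_eq_neg_one_iff]
    simp [h4]
  -- hence 3 is not a square
  have hp3 : p ≠ 3 := fun h => by rw [h] at h3; norm_num at h3
  have h3ne : (3 : ZMod p) ≠ 0 := by
    have := (ZMod.natCast_eq_zero_iff 3 p)
    intro h30
    have : (p : ℕ) ∣ 3 := by
      have := (ZMod.natCast_eq_zero_iff 3 p).mp (by exact_mod_cast h30)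
      exact this
    have h' := (Nat.prime_dvd_prime_iff_eq hp (by norm_num)).mp this
    exact hp3 h'
  have h3not : ¬ IsSquare (3 : ZMod p) := by
    rintro ⟨b, hb⟩
    obtain ⟨a, ha⟩ := hneg3
    have hbne : b ≠ 0 := by
      intro h; rw [h, mul_zero] at hb; exact h3ne hb
    apply hneg1
    refine ⟨a / b, ?_⟩
    rw [div_mul_div_comm, ← ha, ← hb, neg_div, div_self h3ne]
  -- quadratic reciprocity with q = 3
  haveI : Fact (Nat.Prime 3) := ⟨by norm_num⟩
  have hrec := ZMod.exists_sq_eq_prime_iff_of_mod_four_eq_three (p := p) (q := 3) h4 (by norm_num) hp3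
  have hps : IsSquare ((p : ZMod 3)) := by
    by_contra hns
    exact h3not (hrec.mpr hns)
  have hp2 : ((p : ZMod 3)) = 2 := by
    rw [← ZMod.natCast_mod, h3]; rfl
  rw [hp2] at hps
  exact aux_not_sq_two hps
end
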